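/- arXiv:math/0409559 — 2 statements merged into one kernel-verified Lean document; each statement's English description precedes it below -/
import Mathlib

section
/- Let W be a finite-dimensional representation of the Borel subalgebra 𝔟 = span{H, X} of sl(2,ℂ) ([H,X] = 2X) on which H acts diagonalizably. If W is indecomposable, then the eigenvalues of H on W form an arithmetic progression k, k-2, ..., k-2n for some integer n ≥ 0, each with multiplicity one. -/
/-!
Since `[H, X] = 2X`, the operator `X` raises `H`-eigenvalues by `2`, so it is nilpotent; let
`X ^ (r + 1) = 0 ≠ X ^ r`. Pick an eigenvector `v` of `H` and a coordinate functional `φ` of the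
eigenbasis with `φ (X ^ r v) ≠ 0`. The string `v, X v, …, X ^ r v` spans a submodule `U`, and the
common kernel of the functionals `φ ∘ X ^ i` (`i ≤ r`) is a submodule `V`; both are stable under
`H` and `X`, and they are complementary because the pairing `φ (X ^ (i + j) v)` is
anti-triangular with nonzero antidiagonal. Indecomposability forces `V = 0`, so the string is an
eigenbasis of `H` with eigenvalues `μ, μ + 2, …, μ + 2r`.
-/

theorem mul_pow_sub_pow_mul_eq_smul {R A : Type*} [CommRing R] [Ring A] [Algebra R A]
    {H X : A} {a : R} (h : H * X - X * H = a • X) (n : ℕ) :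
    H * X ^ n - X ^ n * H = (n * a) • X ^ n := by
  induction n with
  | zero => simp
  | succ n ih =>
    calc H * X ^ (n + 1) - X ^ (n + 1) * H
        = (H * X ^ n - X ^ n * H) * X + X ^ n * (H * X - X * H) := by noncomm_ring
      _ = ((n + 1 : ℕ) * a) • X ^ (n + 1) := by
        rw [ih, h, smul_mul_assoc, mul_smul_comm, ← pow_succ, ← add_smul]
        push_cast
        ring_nf

theorem LinearMap.isCompl_range_ker_of_bijective_comp {R M N : Type*} [Ring R] [AddCommGroup M]
    [Module R M] [AddCommGroup N] [Module R N] {f : N →ₗ[R] M} {g : M →ₗ[R] N}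
    (h : Function.Bijective (g ∘ₗ f)) : IsCompl (range f) (ker g) := by
  constructor
  · refine Submodule.disjoint_def.mpr ?_
    rintro _ ⟨y, rfl⟩ hy
    rw [h.1 (by simpa using hy : g (f y) = g (f 0)), map_zero]
  · refine codisjoint_iff_le_sup.mpr fun x _ ↦ ?_
    obtain ⟨y, hy⟩ := h.2 (g x)
    rw [← add_sub_cancel (f y) x]
    exact Submodule.add_mem_sup ⟨y, rfl⟩ (by simp [← hy])

theorem Module.Basis.coord_comp_eq_smul {R M ι : Type*} [CommRing R] [AddCommGroup M]
    [Module R M] {H : Module.End R M} (b : Module.Basis ι R M) (c : ι → R)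
    (hb : ∀ i, H (b i) = c i • b i) (i : ι) : b.coord i ∘ₗ H = c i • b.coord i := by
  refine b.ext fun j ↦ ?_
  rcases eq_or_ne i j with rfl | hij
  · simp [hb]
  · simp [hb, Finsupp.single_eq_of_ne hij]

namespace Module.End

section Eigenvectors

theorem apply_pow_apply_eq_smul {R M : Type*} [CommRing R] [AddCommGroup M] [Module R M]
    {H X : Module.End R M} {a μ : R} (h : H * X - X * H = a • X) {x : M} (hx : H x = μ • x)
    (n : ℕ) : H ((X ^ n) x) = (μ + n * a) • (X ^ n) x := by
  have := congr($(mul_pow_sub_pow_mul_eq_smul h n) x)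
  rw [LinearMap.sub_apply, mul_apply, mul_apply, hx, map_smul, sub_eq_iff_eq_add] at this
  rw [this, LinearMap.smul_apply, add_smul, add_comm]

variable {K V : Type*} [Field K] [CharZero K] [AddCommGroup V] [Module K V]
  [FiniteDimensional K V] {H X : Module.End K V} {a : K}

theorem pow_finrank_apply_eq_zero (ha : a ≠ 0) (h : H * X - X * H = a • X) {μ : K} {x : V}
    (hx : H x = μ • x) : (X ^ Module.finrank K V) x = 0 := by
  set n := Module.finrank K V
  by_contra hne
  have hpow_ne : ∀ j : Fin (n + 1), (X ^ (j : ℕ)) x ≠ 0 := fun j hj ↦ hne <| by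
    rw [← Nat.sub_add_cancel (Nat.lt_succ_iff.mp j.isLt), pow_add, mul_apply, hj, map_zero]
  have hinj : Function.Injective fun j : Fin (n + 1) ↦ μ + (j : ℕ) * a := fun i j hij ↦ by
    simpa [ha, Fin.val_inj] using hij
  have hli := H.eigenvectors_linearIndependent' _ hinj _ fun j ↦
    ⟨mem_eigenspace_iff.mpr (apply_pow_apply_eq_smul h hx j), hpow_ne j⟩
  simpa [n] using hli.fintype_card_le_finrank

theorem pow_finrank_eq_zero_of_basis (ha : a ≠ 0) (h : H * X - X * H = a • X) {ι : Type*}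
    (b : Module.Basis ι K V) (c : ι → K) (hb : ∀ i, H (b i) = c i • b i) :
    X ^ Module.finrank K V = 0 :=
  b.ext fun i ↦ pow_finrank_apply_eq_zero ha h (hb i)

end Eigenvectors

section Strings

variable {R M : Type*} [CommRing R] [AddCommGroup M] [Module R M]
  (N : Module.End R M) (v : M) (φ : M →ₗ[R] R) (r : ℕ)

noncomputable def powCombination : (Fin (r + 1) → R) →ₗ[R] M :=
  Fintype.linearCombination R fun j : Fin (r + 1) ↦ (N ^ (j : ℕ)) v

def powEval : M →ₗ[R] Fin (r + 1) → R :=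
  LinearMap.pi fun i : Fin (r + 1) ↦ φ ∘ₗ N ^ (i : ℕ)

variable {N v φ r}

@[simp]
theorem powCombination_single (j : Fin (r + 1)) :
    powCombination N v r (Pi.single j 1) = (N ^ (j : ℕ)) v := by
  classical
  simp [powCombination]

theorem powEval_comp_powCombination_bijective (hN : N ^ (r + 1) = 0)
    (hφ : IsUnit (φ ((N ^ r) v))) :
    Function.Bijective (powEval N φ r ∘ₗ powCombination N v r) := by
  classical
  set M := LinearMap.toMatrix' (powEval N φ r ∘ₗ powCombination N v r)
  -- `M i j = φ (N ^ (i + j) v)` vanishes for `i + j > r`; reversing the columns makes it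
  -- upper triangular with constant diagonal `φ (N ^ r v)`.
  have hM : ∀ i j, M.submatrix id Fin.revPerm i j = φ ((N ^ ((i : ℕ) + (r - j))) v) := by
    intro i j
    simp [M, powEval, powCombination, pow_add]
  have htri : (M.submatrix id Fin.revPerm).IsUpperTriangular := by
    intro i j hji
    rw [hM, pow_eq_zero_of_le (by simp at hji; omega) hN]
    simp
  have hdet : IsUnit (M.submatrix id Fin.revPerm).det := by
    rw [Matrix.det_of_isUpperTriangular htri]
    refine IsUnit.prod_univ_iff.mpr fun i ↦ ?_
    rwa [hM, Nat.add_sub_cancel' (Nat.lt_succ_iff.mp i.isLt)]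
  rw [Matrix.det_permute', LinearMap.det_toMatrix'] at hdet
  exact (Module.End.isUnit_iff _).mp <| (LinearMap.isUnit_iff_isUnit_det _).mpr <|
    isUnit_of_mul_isUnit_right hdet

theorem map_range_powCombination_le (hN : N ^ (r + 1) = 0) :
    (LinearMap.range (powCombination N v r)).map N ≤ LinearMap.range (powCombination N v r) := by
  rw [powCombination, Fintype.range_linearCombination, Submodule.map_span_le]
  rintro _ ⟨j, rfl⟩
  rw [← mul_apply, ← pow_succ']
  rcases lt_or_ge ((j : ℕ) + 1) (r + 1) with hj | hj
  · exact Submodule.subset_span ⟨⟨_, hj⟩, rfl⟩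
  · simp [pow_eq_zero_of_le hj hN]

theorem map_ker_powEval_le (hN : N ^ (r + 1) = 0) :
    (LinearMap.ker (powEval N φ r)).map N ≤ LinearMap.ker (powEval N φ r) := by
  rintro _ ⟨x, hx, rfl⟩
  ext i
  rw [SetLike.mem_coe, LinearMap.mem_ker, funext_iff] at hx
  simp only [powEval, LinearMap.pi_apply, LinearMap.comp_apply, Pi.zero_apply] at hx ⊢
  rw [← mul_apply, ← pow_succ]
  rcases lt_or_ge ((i : ℕ) + 1) (r + 1) with hi | hi
  · exact hx ⟨_, hi⟩
  · simp [pow_eq_zero_of_le hi hN]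

theorem map_range_powCombination_le_of_apply_eq_smul {H : Module.End R M} {a μ : R}
    (h : H * N - N * H = a • N) (hv : H v = μ • v) :
    (LinearMap.range (powCombination N v r)).map H ≤ LinearMap.range (powCombination N v r) := by
  rw [powCombination, Fintype.range_linearCombination, Submodule.map_span_le]
  rintro _ ⟨j, rfl⟩
  rw [apply_pow_apply_eq_smul h hv]
  exact Submodule.smul_mem _ _ (Submodule.subset_span ⟨j, rfl⟩)

theorem map_ker_powEval_le_of_comp_eq_smul {H : Module.End R M} {a c : R}
    (h : H * N - N * H = a • N) (hφ : φ ∘ₗ H = c • φ) :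
    (LinearMap.ker (powEval N φ r)).map H ≤ LinearMap.ker (powEval N φ r) := by
  rintro _ ⟨x, hx, rfl⟩
  ext i
  rw [SetLike.mem_coe, LinearMap.mem_ker, funext_iff] at hx
  have hcomm := congr(φ ($(mul_pow_sub_pow_mul_eq_smul h i) x))
  simp only [powEval, LinearMap.pi_apply, LinearMap.comp_apply, Pi.zero_apply] at hx ⊢
  simp only [LinearMap.sub_apply, mul_apply, LinearMap.smul_apply, map_sub, map_smul,
    ← LinearMap.comp_apply φ H, hφ, hx] at hcomm
  simpa using hcomm

theorem exists_basis_pow_apply (hN : N ^ (r + 1) = 0) (hφ : IsUnit (φ ((N ^ r) v)))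
    (hker : LinearMap.ker (powEval N φ r) = ⊥) :
    ∃ e : Module.Basis (Fin (r + 1)) R M, ∀ j, e j = (N ^ (j : ℕ)) v := by
  have hbij := powEval_comp_powCombination_bijective hN hφ
  have htop := eq_top_of_isCompl_bot (hker ▸ LinearMap.isCompl_range_ker_of_bijective_comp hbij)
  have hinj : Function.Injective (powCombination N v r) := hbij.1.of_comp (f := powEval N φ r)
  refine ⟨(Pi.basisFun R _).map (.ofBijective _ ⟨hinj, LinearMap.range_eq_top.mp htop⟩),
    fun j ↦ ?_⟩
  rw [Module.Basis.map_apply, Pi.basisFun_apply]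
  exact powCombination_single j

end Strings

end Module.End

open Module.End in
/-- Let `W` be a nonzero finite-dimensional representation of the Borel subalgebra
`𝔟 = span{H, X}` of `sl(2, ℂ)` (so `[H, X] = 2X`), given by endomorphisms `ρH, ρX`,
on which `ρH` acts diagonalizably.  If `W` is indecomposable, then the eigenvalues
of `ρH` form an arithmetic progression `k, k - 2, …, k - 2m`, each with multiplicity
one: there is an eigenbasis `e l` with `ρH (e l) = (k - 2l) • e l`. -/
theorem indecomposable_borel_rep_eigenvalues (W : Type*) [AddCommGroup W] [Module ℂ W]
    [FiniteDimensional ℂ W] [Nontrivial W]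
    (ρH ρX : Module.End ℂ W)
    (hcomm : ρH * ρX - ρX * ρH = 2 • ρX)
    (hdiag : ∃ (ι : Type) (b : Module.Basis ι ℂ W) (c : ι → ℂ), ∀ i, ρH (b i) = c i • b i)
    (hindec : ∀ U V : Submodule ℂ W,
      Submodule.map ρH U ≤ U → Submodule.map ρX U ≤ U →
      Submodule.map ρH V ≤ V → Submodule.map ρX V ≤ V →
      IsCompl U V → U = ⊥ ∨ V = ⊥) :
    ∃ (k : ℂ) (m : ℕ) (e : Module.Basis (Fin (m + 1)) ℂ W),
      Module.finrank ℂ W = m + 1 ∧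
      ∀ l : Fin (m + 1), ρH (e l) = (k - 2 * (l : ℕ)) • e l := by
  obtain ⟨ι, b, c, hb⟩ := hdiag
  replace hcomm : ρH * ρX - ρX * ρH = (2 : ℂ) • ρX := by rw [hcomm, two_smul, two_smul]
  have hnil : IsNilpotent ρX := ⟨_, pow_finrank_eq_zero_of_basis two_ne_zero hcomm b c hb⟩
  obtain ⟨r, hr⟩ := Nat.exists_eq_add_one.mpr (pos_nilpotencyClass_iff.mpr hnil)
  obtain ⟨hN, hNr⟩ := nilpotencyClass_eq_succ_iff.mp hr
  obtain ⟨i, hi⟩ : ∃ i, (ρX ^ r) (b i) ≠ 0 := not_forall.mp fun h ↦ hNr (b.ext (by simpa using h))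
  obtain ⟨j, hj⟩ : ∃ j, b.coord j ((ρX ^ r) (b i)) ≠ 0 :=
    not_forall.mp (mt b.forall_coord_eq_zero_iff.mp hi)
  replace hj := isUnit_iff_ne_zero.mpr hj
  have hrange : LinearMap.range (powCombination ρX (b i) r) ≠ ⊥ := fun h ↦
    hi ((Submodule.mem_bot ℂ).mp (h ▸ ⟨Pi.single (Fin.last r) 1, by simp⟩))
  have hker := (hindec _ _ (map_range_powCombination_le_of_apply_eq_smul hcomm (hb i))
    (map_range_powCombination_le hN)
    (map_ker_powEval_le_of_comp_eq_smul hcomm (b.coord_comp_eq_smul c hb j))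
    (map_ker_powEval_le hN)
    (LinearMap.isCompl_range_ker_of_bijective_comp
      (powEval_comp_powCombination_bijective hN hj))).resolve_left hrange
  obtain ⟨e, he⟩ := exists_basis_pow_apply hN hj hker
  refine ⟨c i + 2 * r, r, e.reindex Fin.revPerm, by simp [Module.finrank_eq_card_basis e],
    fun l ↦ ?_⟩
  rw [Module.Basis.reindex_apply, he, apply_pow_apply_eq_smul hcomm (hb i)]
  simp [Fin.revPerm, Fin.val_rev, Nat.cast_sub (Nat.lt_succ_iff.mp l.isLt)]
  congr 1
  ring
end

section
/- An indecomposable finite-dimensional representation of the Borel subalgebra 𝔟 = span{H, X} of sl(2,ℂ) with diagonalizable H-action and H-eigenvalues k, k-2, ..., k-2n extends to a representation of sl(2,ℂ) if and only if k = n. -/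
/-!
Necessity is a trace argument: `ρH = [ρX, ρY]` has trace zero, while its trace is
`∑ l ≤ m, (k - 2l) = (m + 1)(k - m)`.

For sufficiency, `[H, X] = 2X` makes `X` raise `H`-weights by `2`, so in the eigenbasis
`X e₀ = 0` and `X e_{l+1} = c_l e_l`. If some `c_l` vanished, `span {e_i | i ≤ l}` and
`span {e_i | i > l}` would be complementary `𝔟`-submodules, so indecomposability forces
`c_l ≠ 0`, and `Y e_l = (l + 1)(m - l) / c_l • e_{l+1}` completes the `sl(2)`-triple.
-/

open Module Submodule

namespace Module.Basis

variable {R W ι : Type*} [CommRing R] [AddCommGroup W] [Module R W]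
  (e : Basis ι R W) {H : End R W} {wt : ι → R}

theorem commutator_eq_smul_iff (hH : ∀ i, H (e i) = wt i • e i) (T : End R W) (a : R) :
    H * T - T * H = a • T ↔ ∀ i, H (T (e i)) = (wt i + a) • T (e i) := by
  refine ⟨fun h i => ?_, fun h => e.ext fun i => ?_⟩
  · simpa [hH, sub_eq_iff_eq_add, add_smul, add_comm] using congr($h (e i))
  · simp [hH, h i, add_smul]

theorem trace_eq_sum_of_apply_eq_smul [Fintype ι] [DecidableEq ι]
    (hH : ∀ i, H (e i) = wt i • e i) : LinearMap.trace R W H = ∑ i, wt i := by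
  have hmat : LinearMap.toMatrix e e H = Matrix.diagonal wt := by
    ext i j
    rcases eq_or_ne i j with rfl | hij
    · simp [LinearMap.toMatrix_apply, hH]
    · simp [LinearMap.toMatrix_apply, hH, hij]
  rw [LinearMap.trace_eq_matrix_trace R e, hmat, Matrix.trace_diagonal]

theorem repr_eq_zero_of_apply_eq_smul [NoZeroDivisors R] (hH : ∀ i, H (e i) = wt i • e i)
    {w : W} {μ : R} (hw : H w = μ • w) {j : ι} (hj : wt j ≠ μ) : e.repr w j = 0 := by
  have hcoord : (e.coord j).comp H = wt j • e.coord j := e.ext fun i => by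
    rcases eq_or_ne i j with rfl | hij
    · simp [hH]
    · simp [hH, hij]
  have hwj : μ * e.repr w j = wt j * e.repr w j := by simpa [hw] using congr($hcoord w)
  exact (mul_eq_zero.1 (by linear_combination hwj : (μ - wt j) * e.repr w j = 0)).resolve_left
    (sub_ne_zero.2 hj.symm)

theorem eq_smul_of_repr_eq_zero {w : W} {j : ι} (h : ∀ i ≠ j, e.repr w i = 0) :
    w = e.repr w j • e j :=
  e.ext_elem fun i => by
    rcases eq_or_ne i j with rfl | hij
    · simp
    · simp [h i hij, hij.symm]

theorem map_span_image_le_of_apply_eq_smul (hH : ∀ i, H (e i) = wt i • e i) (S : Set ι) :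
    (span R (e '' S)).map H ≤ span R (e '' S) := by
  rw [map_span_le]
  rintro _ ⟨i, hi, rfl⟩
  rw [hH]
  exact smul_mem _ _ (subset_span (Set.mem_image_of_mem e hi))

end Module.Basis

theorem Fin.sum_sub_two_mul {R : Type*} [CommRing R] (k : R) (m : ℕ) :
    ∑ l : Fin (m + 1), (k - 2 * (l : ℕ)) = (m + 1) * (k - m) := by
  rw [Fin.sum_univ_eq_sum_range (fun l => k - 2 * (l : R))]
  induction m with
  | zero => simp
  | succ n ih => rw [Finset.sum_range_succ, ih]; push_cast; ring

namespace BorelRep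

variable {K W : Type*} [Field K] [AddCommGroup W] [Module K W] {m : ℕ}
  (e : Basis (Fin (m + 1)) K W) {ρH ρX : End K W} {k : K}

theorem highest_weight_eq_of_commutator_eq [CharZero K]
    (hH : ∀ l : Fin (m + 1), ρH (e l) = (k - 2 * (l : ℕ)) • e l)
    {ρY : End K W} (hXY : ρX * ρY - ρY * ρX = ρH) : k = m := by
  have := Module.Free.of_basis e
  have := Module.Finite.of_basis e
  have htr : LinearMap.trace K W ρH = 0 := by
    rw [← hXY, map_sub, LinearMap.trace_mul_comm, sub_self]
  rw [e.trace_eq_sum_of_apply_eq_smul hH, Fin.sum_sub_two_mul] at htr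
  exact sub_eq_zero.1 ((mul_eq_zero.1 htr).resolve_left (Nat.cast_add_one_ne_zero m))

theorem repr_raising_apply_eq_zero [CharZero K]
    (hH : ∀ l : Fin (m + 1), ρH (e l) = (k - 2 * (l : ℕ)) • e l)
    (hcomm : ρH * ρX - ρX * ρH = (2 : K) • ρX) {i j : Fin (m + 1)}
    (hij : (j : ℕ) + 1 ≠ i) : e.repr (ρX (e i)) j = 0 := by
  refine e.repr_eq_zero_of_apply_eq_smul hH ((e.commutator_eq_smul_iff hH ρX 2).1 hcomm i) ?_
  intro h
  have hji : ((j : ℕ) : K) + 1 = (i : ℕ) := by linear_combination -h / 2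
  exact hij (by exact_mod_cast hji)

theorem raising_apply_zero [CharZero K]
    (hH : ∀ l : Fin (m + 1), ρH (e l) = (k - 2 * (l : ℕ)) • e l)
    (hcomm : ρH * ρX - ρX * ρH = (2 : K) • ρX) : ρX (e 0) = 0 :=
  e.ext_elem fun j => by
    simpa using repr_raising_apply_eq_zero e hH hcomm (i := 0) (j := j) (by simp)

theorem exists_raising_apply_succ [CharZero K]
    (hH : ∀ l : Fin (m + 1), ρH (e l) = (k - 2 * (l : ℕ)) • e l)
    (hcomm : ρH * ρX - ρX * ρH = (2 : K) • ρX) :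
    ∃ c : Fin m → K, ∀ l, ρX (e l.succ) = c l • e l.castSucc := by
  refine ⟨fun l => e.repr (ρX (e l.succ)) l.castSucc, fun l => ?_⟩
  refine e.eq_smul_of_repr_eq_zero fun j hj => repr_raising_apply_eq_zero e hH hcomm ?_
  contrapose! hj
  ext
  simp only [Fin.val_succ] at hj
  simp only [Fin.val_castSucc]
  omega

theorem raising_map_span_image_le {c : Fin m → K} (hX0 : ρX (e 0) = 0)
    (hXsucc : ∀ l, ρX (e l.succ) = c l • e l.castSucc) {S : Set (Fin (m + 1))}
    (hS : ∀ l, l.succ ∈ S → c l ≠ 0 → l.castSucc ∈ S) :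
    (span K (e '' S)).map ρX ≤ span K (e '' S) := by
  rw [map_span_le]
  rintro _ ⟨i, hi, rfl⟩
  cases i using Fin.cases with
  | zero => simp [hX0]
  | succ l =>
    rw [hXsucc]
    by_cases hc : c l = 0
    · simp [hc]
    · exact smul_mem _ _ (subset_span (Set.mem_image_of_mem e (hS l hi hc)))

theorem raising_coeff_ne_zero {wt : Fin (m + 1) → K} (hH : ∀ l, ρH (e l) = wt l • e l)
    {c : Fin m → K} (hX0 : ρX (e 0) = 0) (hXsucc : ∀ l, ρX (e l.succ) = c l • e l.castSucc)
    (hindec : ∀ U V : Submodule K W,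
      Submodule.map ρH U ≤ U → Submodule.map ρX U ≤ U →
      Submodule.map ρH V ≤ V → Submodule.map ρX V ≤ V →
      IsCompl U V → U = ⊥ ∨ V = ⊥)
    (l : Fin m) : c l ≠ 0 := by
  intro hcl
  set S : Set (Fin (m + 1)) := {i | i ≤ l.castSucc}
  have hSinv : ∀ j, j.succ ∈ S → c j ≠ 0 → j.castSucc ∈ S := fun j hj _ =>
    (Fin.castSucc_lt_succ (i := j)).le.trans hj
  have hSinv' : ∀ j, j.succ ∈ Sᶜ → c j ≠ 0 → j.castSucc ∈ Sᶜ := fun j hj hcj => by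
    have hjl : j ≠ l := by rintro rfl; exact hcj hcl
    simp only [S, Set.mem_compl_iff, Set.mem_ofPred_eq, not_le, Fin.lt_def, Fin.val_succ,
      Fin.val_castSucc, ne_eq, Fin.ext_iff] at hj hjl ⊢
    omega
  rcases hindec _ _ (e.map_span_image_le_of_apply_eq_smul hH S)
      (raising_map_span_image_le e hX0 hXsucc hSinv) (e.map_span_image_le_of_apply_eq_smul hH Sᶜ)
      (raising_map_span_image_le e hX0 hXsucc hSinv')
      (e.linearIndependent.isCompl_span_image e.span_eq isCompl_compl) with h | h
  · exact e.ne_zero 0 ((Submodule.eq_bot_iff _).1 h _ (subset_span ⟨0, Fin.zero_le _, rfl⟩))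
  · exact e.ne_zero (Fin.last m)
      ((Submodule.eq_bot_iff _).1 h _ (subset_span ⟨_, not_le.2 (Fin.castSucc_lt_last l), rfl⟩))

/-- The coefficients are chosen so that `[X, Y]` acts on `e_l` by
`(l + 1)(m - l) - l(m - l + 1) = m - 2l`. -/
noncomputable def lowering (c : Fin m → K) : End K W :=
  e.constr K <|
    Fin.lastCases 0 fun l => ((((l : ℕ) : K) + 1) * ((m : K) - (l : ℕ)) / c l) • e l.succ

@[simp]
theorem lowering_apply_last (c : Fin m → K) : lowering e c (e (Fin.last m)) = 0 := by
  simp [lowering]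

@[simp]
theorem lowering_apply_castSucc (c : Fin m → K) (l : Fin m) :
    lowering e c (e l.castSucc) =
      ((((l : ℕ) : K) + 1) * ((m : K) - (l : ℕ)) / c l) • e l.succ := by
  simp [lowering]

theorem raising_lowering_apply {c : Fin m → K} (hc : ∀ l, c l ≠ 0)
    (hXsucc : ∀ l, ρX (e l.succ) = c l • e l.castSucc) (j : Fin (m + 1)) :
    ρX (lowering e c (e j)) = ((((j : ℕ) : K) + 1) * ((m : K) - (j : ℕ))) • e j := by
  cases j using Fin.lastCases with
  | last => simp
  | cast l =>
    rw [lowering_apply_castSucc, map_smul, hXsucc, smul_smul, div_mul_cancel₀ _ (hc l)]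
    rfl

theorem lowering_raising_apply {c : Fin m → K} (hc : ∀ l, c l ≠ 0) (hX0 : ρX (e 0) = 0)
    (hXsucc : ∀ l, ρX (e l.succ) = c l • e l.castSucc) (j : Fin (m + 1)) :
    lowering e c (ρX (e j)) = (((j : ℕ) : K) * ((m : K) - (j : ℕ) + 1)) • e j := by
  cases j using Fin.cases with
  | zero => simp [hX0]
  | succ l =>
    rw [hXsucc, map_smul, lowering_apply_castSucc, smul_smul, mul_div_cancel₀ _ (hc l)]
    congr 1
    simp only [Fin.val_succ]
    push_cast
    ring

theorem commutator_lowering (c : Fin m → K)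
    (hH : ∀ l : Fin (m + 1), ρH (e l) = ((m : K) - 2 * (l : ℕ)) • e l) :
    ρH * lowering e c - lowering e c * ρH = (-2 : K) • lowering e c := by
  refine (e.commutator_eq_smul_iff hH _ _).2 fun j => ?_
  cases j using Fin.lastCases with
  | last => simp
  | cast l =>
    rw [lowering_apply_castSucc, map_smul, hH, smul_smul, smul_smul]
    congr 1
    simp only [Fin.val_succ, Fin.val_castSucc]
    push_cast
    ring

theorem raising_lowering_sub_lowering_raising {c : Fin m → K} (hc : ∀ l, c l ≠ 0)
    (hX0 : ρX (e 0) = 0) (hXsucc : ∀ l, ρX (e l.succ) = c l • e l.castSucc)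
    (hH : ∀ l : Fin (m + 1), ρH (e l) = ((m : K) - 2 * (l : ℕ)) • e l) :
    ρX * lowering e c - lowering e c * ρX = ρH :=
  e.ext fun j => by
    rw [LinearMap.sub_apply, Module.End.mul_apply, Module.End.mul_apply,
      raising_lowering_apply e hc hXsucc, lowering_raising_apply e hc hX0 hXsucc, ← sub_smul, hH]
    congr 1
    ring

end BorelRep

open BorelRep in
theorem indecomposable_borel_rep_extends_iff_general (W : Type*) [AddCommGroup W] [Module ℂ W]
    (ρH ρX : Module.End ℂ W)
    (hcomm : ρH * ρX - ρX * ρH = 2 • ρX)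
    (hindec : ∀ U V : Submodule ℂ W,
      Submodule.map ρH U ≤ U → Submodule.map ρX U ≤ U →
      Submodule.map ρH V ≤ V → Submodule.map ρX V ≤ V →
      IsCompl U V → U = ⊥ ∨ V = ⊥)
    (k : ℂ) (m : ℕ) (e : Module.Basis (Fin (m + 1)) ℂ W)
    (hdiag : ∀ l : Fin (m + 1), ρH (e l) = (k - 2 * (l : ℕ)) • e l) :
    (∃ ρY : Module.End ℂ W,
      ρH * ρY - ρY * ρH = -(2 • ρY) ∧ ρX * ρY - ρY * ρX = ρH) ↔ k = m := by
  refine ⟨fun ⟨ρY, _, hXY⟩ => highest_weight_eq_of_commutator_eq e hdiag hXY, ?_⟩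
  rintro rfl
  have hcomm' : ρH * ρX - ρX * ρH = (2 : ℂ) • ρX := by
    rw [hcomm, ← Nat.cast_smul_eq_nsmul ℂ, Nat.cast_ofNat]
  have hX0 := raising_apply_zero e hdiag hcomm'
  obtain ⟨c, hXsucc⟩ := exists_raising_apply_succ e hdiag hcomm'
  have hc := raising_coeff_ne_zero e hdiag hX0 hXsucc hindec
  refine ⟨lowering e c, ?_, raising_lowering_sub_lowering_raising e hc hX0 hXsucc hdiag⟩
  rw [commutator_lowering e c hdiag, neg_smul, ← Nat.cast_smul_eq_nsmul ℂ, Nat.cast_ofNat]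

/-- An indecomposable finite-dimensional representation of the Borel subalgebra
`𝔟 = span{H, X}` of `sl(2, ℂ)` (with `[H, X] = 2X`, represented by `ρH, ρX`) whose
`H`-action is diagonal with eigenvalues `k, k - 2, …, k - 2m` extends to a
representation of `sl(2, ℂ)` (i.e. there exists `ρY` with `[ρH, ρY] = -2ρY` and
`[ρX, ρY] = ρH`) if and only if `k = m`. -/
theorem indecomposable_borel_rep_extends_iff (W : Type*) [AddCommGroup W] [Module ℂ W]
    [FiniteDimensional ℂ W] [Nontrivial W]
    (ρH ρX : Module.End ℂ W)
    (hcomm : ρH * ρX - ρX * ρH = 2 • ρX)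
    (hindec : ∀ U V : Submodule ℂ W,
      Submodule.map ρH U ≤ U → Submodule.map ρX U ≤ U →
      Submodule.map ρH V ≤ V → Submodule.map ρX V ≤ V →
      IsCompl U V → U = ⊥ ∨ V = ⊥)
    (k : ℂ) (m : ℕ) (e : Module.Basis (Fin (m + 1)) ℂ W)
    (hdiag : ∀ l : Fin (m + 1), ρH (e l) = (k - 2 * (l : ℕ)) • e l) :
    (∃ ρY : Module.End ℂ W,
      ρH * ρY - ρY * ρH = -(2 • ρY) ∧ ρX * ρY - ρY * ρX = ρH) ↔ k = m :=
  indecomposable_borel_rep_extends_iff_general W ρH ρX hcomm hindec k m e hdiag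
end
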